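/- Let S be a finite set of natural numbers with |S| = a + b. Then, in the ring of Laurent polynomials ℤ[v, v⁻¹], the sum over all a-element subsets T ⊆ S of v^{ℓ(S∖T, T) − ℓ(T, S∖T)} equals the balanced Gaussian binomial coefficient [a+b choose a]_v. (This is the state-sum proof of the 'parallel digon' web relation.) -/

import Mathlib

open Finset

noncomputable section

/-- `ℓ(S,T)` : the number of pairs `(i,j)` with `i ∈ S`, `j ∈ T` and `i < j`. -/
def ellC (S T : Finset ℕ) : ℕ := ((S ×ˢ T).filter fun p => p.1 < p.2).card

/-- The quantum parameter `v`, an invertible indeterminate. -/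
def v : RatFunc ℚ := RatFunc.X

/-- The balanced quantum integer `[n]_v = v^(n-1) + v^(n-3) + ⋯ + v^(1-n)`. -/
def bInt (n : ℕ) : RatFunc ℚ := ∑ i ∈ range n, v ^ ((n : ℤ) - 1 - 2 * (i : ℤ))

/-- The balanced quantum factorial `[n]_v!`. -/
def bFact (n : ℕ) : RatFunc ℚ := ∏ i ∈ range n, bInt (i + 1)

/-- The balanced Gaussian binomial coefficient `[n choose k]_v`. -/
def bBinom (n k : ℕ) : RatFunc ℚ := bFact n / (bFact k * bFact (n - k))

/-!
Adjoin to `S` an element `x` larger than all of its elements. A state `T` either avoids `x`,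
and then `x` adds `|T|` to `ℓ(T, S ∖ T)`, or contains it, and then `x` adds `|S ∖ T|` to
`ℓ(S ∖ T, T)`. So the state sums satisfy the `v`-Pascal rule
`[n+1 choose a+1] = v^(n-a) [n choose a] + v^(-(a+1)) [n choose a+1]`, which follows from
`[p+q] = v^q [p] + v^(-p) [q]`, and induction on `|S|` concludes.
-/

lemma v_ne_zero : v ≠ 0 := RatFunc.X_ne_zero

lemma bInt_eq_zpow_mul (n : ℕ) : bInt n = v ^ (1 - (n : ℤ)) *
    algebraMap (Polynomial ℚ) (RatFunc ℚ) (∑ i ∈ range n, Polynomial.X ^ (2 * i)) := by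
  rw [map_sum, mul_sum, bInt, ← sum_range_reflect]
  refine sum_congr rfl fun i hi => ?_
  rw [map_pow, RatFunc.algebraMap_X, ← v, ← zpow_natCast, ← zpow_add₀ v_ne_zero]
  have := mem_range.1 hi
  congr 1
  omega

lemma bInt_ne_zero {n : ℕ} (hn : n ≠ 0) : bInt n ≠ 0 := by
  rw [bInt_eq_zpow_mul]
  refine mul_ne_zero (zpow_ne_zero _ v_ne_zero) (RatFunc.algebraMap_ne_zero fun h => hn ?_)
  simpa [Polynomial.eval_finsetSum] using congrArg (Polynomial.eval 1) h

lemma bFact_ne_zero (n : ℕ) : bFact n ≠ 0 :=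
  prod_ne_zero_iff.2 fun _ _ => bInt_ne_zero (Nat.succ_ne_zero _)

lemma bFact_zero : bFact 0 = 1 := prod_range_zero _

lemma bFact_succ (n : ℕ) : bFact (n + 1) = bFact n * bInt (n + 1) := prod_range_succ _ _

lemma bInt_add (p q : ℕ) : bInt (p + q) = v ^ (q : ℤ) * bInt p + v ^ (-(p : ℤ)) * bInt q := by
  simp only [bInt, sum_range_add, mul_sum, ← zpow_add₀ v_ne_zero]
  congr 1 <;> refine sum_congr rfl fun i _ => ?_ <;> push_cast <;> ring_nf

lemma bBinom_zero (n : ℕ) : bBinom n 0 = 1 := by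
  rw [bBinom, bFact_zero, one_mul, Nat.sub_zero, div_self (bFact_ne_zero n)]

lemma bBinom_self (n : ℕ) : bBinom n n = 1 := by
  rw [bBinom, Nat.sub_self, bFact_zero, mul_one, div_self (bFact_ne_zero n)]

lemma bBinom_succ_succ {n a : ℕ} (h : a < n) :
    bBinom (n + 1) (a + 1) =
      v ^ ((n : ℤ) - a) * bBinom n a + v ^ (-((a : ℤ) + 1)) * bBinom n (a + 1) := by
  obtain ⟨b, rfl⟩ := Nat.exists_eq_add_of_lt h
  have hpascal : bInt (a + b + 1 + 1) =
      v ^ ((b : ℤ) + 1) * bInt (a + 1) + v ^ (-((a : ℤ) + 1)) * bInt (b + 1) := by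
    rw [show a + b + 1 + 1 = (a + 1) + (b + 1) by ring]
    exact_mod_cast bInt_add (a + 1) (b + 1)
  rw [bBinom, bBinom, bBinom, show a + b + 1 + 1 - (a + 1) = b + 1 by omega,
    show a + b + 1 - a = b + 1 by omega, show a + b + 1 - (a + 1) = b by omega,
    bFact_succ (a + b + 1), hpascal, bFact_succ a, bFact_succ b]
  have := bFact_ne_zero a
  have := bFact_ne_zero b
  have := bInt_ne_zero a.succ_ne_zero
  have := bInt_ne_zero b.succ_ne_zero
  field_simp
  push_cast
  ring_nf

lemma ellC_eq_sum_left (A B : Finset ℕ) : ellC A B = ∑ i ∈ A, #{j ∈ B | i < j} := by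
  simp only [ellC, card_filter, sum_product]

lemma ellC_eq_sum_right (A B : Finset ℕ) : ellC A B = ∑ j ∈ B, #{i ∈ A | i < j} := by
  simp only [ellC, card_filter, sum_product_right]

lemma ellC_empty_left (B : Finset ℕ) : ellC ∅ B = 0 := by
  simp [ellC]

lemma ellC_empty_right (A : Finset ℕ) : ellC A ∅ = 0 := by
  simp [ellC]

lemma ellC_insert_left_of_forall_lt {x : ℕ} {A B : Finset ℕ} (hx : x ∉ A)
    (hB : ∀ j ∈ B, j < x) : ellC (insert x A) B = ellC A B := by
  rw [ellC_eq_sum_left, sum_insert hx, ← ellC_eq_sum_left,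
    filter_false_of_mem fun j hj => (hB j hj).not_gt, card_empty, zero_add]

lemma ellC_insert_right_of_forall_lt {x : ℕ} {A B : Finset ℕ} (hx : x ∉ B)
    (hA : ∀ i ∈ A, i < x) : ellC A (insert x B) = ellC A B + #A := by
  rw [ellC_eq_sum_right, sum_insert hx, ← ellC_eq_sum_right, filter_true_of_mem hA, add_comm]

def stateWeight (S T : Finset ℕ) : ℤ := ellC (S \ T) T - ellC T (S \ T)

def stateSum (S : Finset ℕ) (a : ℕ) : RatFunc ℚ := ∑ T ∈ S.powersetCard a, v ^ stateWeight S T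

section InsertMax

variable {x : ℕ} {S T : Finset ℕ}

lemma stateWeight_insert_of_forall_lt (hS : ∀ y ∈ S, y < x) (hT : T ⊆ S) :
    stateWeight (insert x S) T = stateWeight S T - #T := by
  have hxT : x ∉ S \ T := fun h => (hS x (mem_sdiff.1 h).1).false
  have hTx : ∀ j ∈ T, j < x := fun j hj => hS j (hT hj)
  rw [stateWeight, stateWeight, insert_sdiff_of_notMem _ fun h => (hTx x h).false,
    ellC_insert_left_of_forall_lt hxT hTx, ellC_insert_right_of_forall_lt hxT hTx]
  push_cast
  ring

lemma stateWeight_insert_insert_of_forall_lt (hS : ∀ y ∈ S, y < x) (hT : T ⊆ S) :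
    stateWeight (insert x S) (insert x T) = stateWeight S T + #(S \ T) := by
  have hxS : x ∉ S := fun h => (hS x h).false
  have hxT : x ∉ T := fun h => hxS (hT h)
  have hST : ∀ i ∈ S \ T, i < x := fun i hi => hS i (mem_sdiff.1 hi).1
  rw [stateWeight, stateWeight, insert_sdiff_insert, sdiff_insert_of_notMem hxS,
    ellC_insert_right_of_forall_lt hxT hST, ellC_insert_left_of_forall_lt hxT hST]
  push_cast
  ring

lemma stateSum_insert_succ_of_forall_lt (hS : ∀ y ∈ S, y < x) (a : ℕ) :
    stateSum (insert x S) (a + 1) =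
      v ^ ((#S : ℤ) - a) * stateSum S a + v ^ (-((a : ℤ) + 1)) * stateSum S (a + 1) := by
  have hxS : x ∉ S := fun h => (hS x h).false
  have hdisj : Disjoint (S.powersetCard (a + 1)) ((S.powersetCard a).image (insert x)) :=
    disjoint_left.2 fun T hT hT' => by
      obtain ⟨T', -, rfl⟩ := mem_image.1 hT'
      exact hxS ((mem_powersetCard.1 hT).1 (mem_insert_self x T'))
  have hinj : Set.InjOn (insert x) (S.powersetCard a : Set (Finset ℕ)) := fun T₁ h₁ T₂ h₂ h => by
    rw [← erase_insert fun hx => hxS ((mem_powersetCard.1 h₁).1 hx),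
      ← erase_insert fun hx => hxS ((mem_powersetCard.1 h₂).1 hx), h]
  rw [stateSum, powersetCard_succ_insert hxS, sum_union hdisj, sum_image hinj, add_comm,
    stateSum, stateSum, mul_sum, mul_sum]
  congr 1 <;> refine sum_congr rfl fun T hT => ?_ <;> obtain ⟨hTS, hTa⟩ := mem_powersetCard.1 hT
  · rw [stateWeight_insert_insert_of_forall_lt hS hTS, card_sdiff_of_subset hTS, hTa,
      ← zpow_add₀ v_ne_zero, Nat.cast_sub (hTa ▸ card_le_card hTS)]
    ring_nf
  · rw [stateWeight_insert_of_forall_lt hS hTS, hTa, ← zpow_add₀ v_ne_zero]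
    push_cast
    ring_nf

end InsertMax

lemma stateSum_zero (S : Finset ℕ) : stateSum S 0 = 1 := by
  simp [stateSum, stateWeight, ellC_empty_left, ellC_empty_right]

lemma stateSum_card (S : Finset ℕ) : stateSum S #S = 1 := by
  simp [stateSum, stateWeight, ellC_empty_left, ellC_empty_right]

lemma stateSum_eq_bBinom (S : Finset ℕ) : ∀ a ≤ #S, stateSum S a = bBinom #S a := by
  induction S using Finset.induction_on_max with
  | empty => simp [stateSum_zero, bBinom_zero]
  | insert x S hS ih =>
    have hxS : x ∉ S := fun h => (hS x h).false
    rw [card_insert_of_notMem hxS]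
    rintro (_ | a) ha
    · rw [stateSum_zero, bBinom_zero]
    rcases (Nat.le_of_succ_le_succ ha).lt_or_eq with ha | rfl
    · rw [stateSum_insert_succ_of_forall_lt hS, bBinom_succ_succ ha, ih a ha.le, ih (a + 1) ha]
    · rw [← card_insert_of_notMem hxS, stateSum_card, card_insert_of_notMem hxS, bBinom_self]

theorem state_sum_digon (a b : ℕ) (S : Finset ℕ) (hS : S.card = a + b) :
    ∑ T ∈ S.powersetCard a,
        v ^ ((ellC (S \ T) T : ℤ) - (ellC T (S \ T) : ℤ))
      = bBinom (a + b) a := by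
  rw [← hS]
  exact stateSum_eq_bBinom S a (hS ▸ Nat.le_add_right a b)
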